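/- Let G = Sp(4, F_q) with q odd, g₁ = diag(1, -1, -1, 1) ∈ G, and π any complex representation of G admitting a nondegenerate invariant symmetric bilinear form. Then Θ_π(I) + Θ_π(-I) - 2Θ_π(g₁) is divisible by 16. -/

import Mathlib

open Matrix

/-- The antidiagonal symplectic form matrix with entries 1, -1, 1, -1 from the top right. -/
def J4 (F : Type*) [Field F] : Matrix (Fin 4) (Fin 4) F :=
  fun i j => if (i : ℕ) + (j : ℕ) = 3 then (-1 : F) ^ (i : ℕ) else 0

/-- `Sp(4, F)`, the symplectic group for the form `J4`, as a submonoid of the matrix ring. -/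
def Sp4 (F : Type*) [Field F] : Submonoid (Matrix (Fin 4) (Fin 4) F) where
  carrier := {A | Aᵀ * J4 F * A = J4 F}
  one_mem' := by simp
  mul_mem' := by
    intro a b ha hb
    simp only [Set.mem_setOf_eq] at *
    have h : (a * b)ᵀ * J4 F * (a * b) = bᵀ * (aᵀ * J4 F * a) * b := by
      rw [transpose_mul]
      noncomm_ring
    rw [h, ha, hb]

/-!
Write `G, Z, T, S` for the images under `π` of `g₁`, `-I`, and two elements `t, s` of the
middle `SL₂` block with `t² = s² = g₁` and `st = tsg₁` (a quaternion group; `s` needs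
`a² + b² = -1` in `F`). Since `g₁ · (-I)` is conjugate to `g₁`, the character combination is
`tr((1 - G)(1 + Z))`, i.e. four times the dimension of `{G = -1, Z = 1}`. On that space `T² = -1`,
so it splits into the `±i`-eigenspaces of `T`, which `S` interchanges; hence the combination is
`8 · dim W` for `W` the `i`-eigenspace. Finally `(v, w) ↦ B(v, S w)` is a nondegenerate
skew-symmetric form on `W`: `B` pairs `W` with `S W`, since `W` is `B`-isotropic and orthogonal to
the other eigenspaces of `G` and `Z`. So `dim W` is even.
-/

open Module

theorem Matrix.even_card_of_transpose_eq_neg {R n : Type*} [CommRing R] [NoZeroDivisors R]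
    [NeZero (2 : R)] [Fintype n] [DecidableEq n] {M : Matrix n n R} (hM : Mᵀ = -M)
    (hdet : M.det ≠ 0) : Even (Fintype.card n) := by
  by_contra hodd
  rw [Nat.not_even_iff_odd] at hodd
  have h : M.det = -M.det :=
    calc M.det = Mᵀ.det := M.det_transpose.symm
      _ = -M.det := by rw [hM, det_neg, hodd.neg_one_pow, neg_one_mul]
  exact hdet (by simpa [← two_mul, two_ne_zero] using eq_neg_iff_add_eq_zero.mp h)

theorem LinearMap.BilinForm.even_finrank_of_nondegenerate {K V : Type*} [Field K]
    [NeZero (2 : K)] [AddCommGroup V] [Module K V] [FiniteDimensional K V]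
    {β : LinearMap.BilinForm K V} (hβ : β.Nondegenerate) (hskew : ∀ x y, β x y = -β y x) :
    Even (finrank K V) := by
  let b := finBasis K V
  simpa using Matrix.even_card_of_transpose_eq_neg (M := toMatrix b β)
    (by ext i j; simp [hskew (b j) (b i)]) ((nondegenerate_iff_det_ne_zero b).mp hβ)

section JointEigenspace

variable {K V : Type*} [Field K] [AddCommGroup V] [Module K V]

def jointEigenspace (G Z T : End K V) (c : K) : Submodule K V :=
  End.eigenspace G (-1) ⊓ End.eigenspace Z 1 ⊓ End.eigenspace T c

theorem mem_jointEigenspace {G Z T : End K V} {c : K} {v : V} :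
    v ∈ jointEigenspace G Z T c ↔ G v = -v ∧ Z v = v ∧ T v = c • v := by
  simp [jointEigenspace, and_assoc]

/-- The product of the eigenprojections `(1 - G)/2`, `(1 + Z)/2` and `(1 + c⁻¹ T)/2`, the last
one written for `c⁻¹ = -c`. -/
def jointEigenprojection (G Z T : End K V) (c : K) : End K V :=
  ((2 : K)⁻¹ • (1 - G)) * ((2 : K)⁻¹ • (1 + Z)) * ((2 : K)⁻¹ • (1 - c • T))

variable {G Z T S : End K V} {c : K}

theorem jointEigenprojection_add_neg [NeZero (2 : K)] :
    jointEigenprojection G Z T c + jointEigenprojection G Z T (-c) =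
      ((2 : K)⁻¹ • (1 - G)) * ((2 : K)⁻¹ • (1 + Z)) := by
  have halves : (2 : K)⁻¹ • (1 - c • T) + (2 : K)⁻¹ • (1 - (-c) • T) = 1 := by
    match_scalars <;> field_simp <;> ring
  rw [jointEigenprojection, jointEigenprojection, ← mul_add, halves, mul_one]

theorem isProj_jointEigenprojection [NeZero (2 : K)] (hGG : G * G = 1) (hZZ : Z * Z = 1)
    (hTZ : Commute T Z) (hTT : T * T = G) (hc : c * c = -1) :
    LinearMap.IsProj (jointEigenspace G Z T c) (jointEigenprojection G Z T c) := by
  have hGG' : ∀ v, G (G v) = v := DFunLike.congr_fun hGG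
  have hZZ' : ∀ v, Z (Z v) = v := DFunLike.congr_fun hZZ
  have hTT' : ∀ v, T (T v) = G v := DFunLike.congr_fun hTT
  have hTZ' : ∀ v, T (Z v) = Z (T v) := DFunLike.congr_fun hTZ.eq
  have hTG' : ∀ v, T (G v) = G (T v) := by simp [← hTT']
  have hZG' : ∀ v, Z (G v) = G (Z v) := by simp [← hTT', hTZ']
  constructor
  · intro u
    simp only [mem_jointEigenspace, jointEigenprojection, LinearMap.smul_apply, End.mul_apply,
      map_sub, map_add, map_smul, End.one_apply, LinearMap.sub_apply, LinearMap.add_apply,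
      hGG', hZZ', hTT', hTZ', hTG', hZG']
    refine ⟨by module, by module, ?_⟩
    match_scalars <;> grind
  · intro v hv
    obtain ⟨hG, hZ, hT⟩ := mem_jointEigenspace.mp hv
    simp only [jointEigenprojection, LinearMap.smul_apply, End.mul_apply, map_sub, map_add,
      map_smul, End.one_apply, LinearMap.sub_apply, LinearMap.add_apply, hG, hZ, hT, smul_smul,
      hc]
    match_scalars
    field_simp
    norm_num

theorem apply_mem_jointEigenspace_neg (hSS : S * S = G) (hSZ : Commute S Z)
    (hST : S * T = T * S * G) {v : V} (hv : v ∈ jointEigenspace G Z T c) :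
    S v ∈ jointEigenspace G Z T (-c) := by
  obtain ⟨hG, hZ, hT⟩ := mem_jointEigenspace.mp hv
  have hSTv : S (T v) = -T (S v) := by
    simpa [hG] using DFunLike.congr_fun hST v
  refine mem_jointEigenspace.mpr ⟨?_, ?_, ?_⟩
  · have hSG : Commute S G := hSS ▸ (Commute.refl S).mul_right (Commute.refl S)
    rw [← End.mul_apply, ← hSG.eq, End.mul_apply, hG, map_neg]
  · rw [← End.mul_apply, ← hSZ.eq, End.mul_apply, hZ]
  · rw [neg_smul, ← map_smul, ← hT, hSTv, neg_neg]

theorem apply_apply_eq_neg_of_mem_jointEigenspace (hSS : S * S = G) {v : V}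
    (hv : v ∈ jointEigenspace G Z T c) : S (S v) = -v := by
  rw [← End.mul_apply, hSS, (mem_jointEigenspace.mp hv).1]

theorem finrank_jointEigenspace_le_neg [FiniteDimensional K V] (hSS : S * S = G)
    (hSZ : Commute S Z) (hST : S * T = T * S * G) :
    finrank K (jointEigenspace G Z T c) ≤ finrank K (jointEigenspace G Z T (-c)) := by
  refine LinearMap.finrank_le_finrank_of_injective
    (f := S.restrict fun _ ↦ apply_mem_jointEigenspace_neg hSS hSZ hST) fun v w hvw ↦ ?_
  have h := congrArg (fun x ↦ S (Subtype.val x)) hvw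
  simp only [LinearMap.restrict_apply, apply_apply_eq_neg_of_mem_jointEigenspace hSS v.2,
    apply_apply_eq_neg_of_mem_jointEigenspace hSS w.2, neg_inj] at h
  exact Subtype.ext h

theorem finrank_jointEigenspace_neg [FiniteDimensional K V] (hSS : S * S = G)
    (hSZ : Commute S Z) (hST : S * T = T * S * G) :
    finrank K (jointEigenspace G Z T (-c)) = finrank K (jointEigenspace G Z T c) := by
  refine le_antisymm ?_ (finrank_jointEigenspace_le_neg hSS hSZ hST)
  have h := finrank_jointEigenspace_le_neg (c := -c) hSS hSZ hST
  rwa [neg_neg] at h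

theorem trace_one_sub_mul_one_add [FiniteDimensional K V] [NeZero (2 : K)] (hGG : G * G = 1)
    (hZZ : Z * Z = 1) (hTZ : Commute T Z) (hTT : T * T = G) (hSS : S * S = G)
    (hSZ : Commute S Z) (hST : S * T = T * S * G) (hc : c * c = -1) :
    LinearMap.trace K V ((1 - G) * (1 + Z)) = 8 * finrank K (jointEigenspace G Z T c) := by
  have hP := congrArg (LinearMap.trace K V)
    (jointEigenprojection_add_neg (G := G) (Z := Z) (T := T) (c := c))
  rw [map_add, (isProj_jointEigenprojection hGG hZZ hTZ hTT hc).trace,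
    (isProj_jointEigenprojection hGG hZZ hTZ hTT (by rwa [neg_mul_neg])).trace,
    finrank_jointEigenspace_neg hSS hSZ hST, smul_mul_smul_comm, map_smul, smul_eq_mul] at hP
  field_simp at hP
  linear_combination -hP

variable (B : V →ₗ[K] V →ₗ[K] K)

theorem bilin_apply_jointEigenprojection_neg [NeZero (2 : K)] (hGG : G * G = 1) (hZZ : Z * Z = 1)
    (hTT : T * T = G) (hc : c * c = -1) (hBZ : ∀ v w, B (Z v) (Z w) = B v w)
    (hBT : ∀ v w, B (T v) (T w) = B v w) {v : V} (hv : v ∈ jointEigenspace G Z T c) (u : V) :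
    B v (jointEigenprojection G Z T (-c) u) = B v u := by
  obtain ⟨hG, hZ, hT⟩ := mem_jointEigenspace.mp hv
  have hGG' : ∀ y, G (G y) = y := DFunLike.congr_fun hGG
  have hZZ' : ∀ y, Z (Z y) = y := DFunLike.congr_fun hZZ
  have hTT' : ∀ y, T (T y) = G y := DFunLike.congr_fun hTT
  have hBG : ∀ y, B v (G y) = -B v y := fun y ↦ by
    have h := (hBT (T v) (T (G y))).trans (hBT v (G y))
    rw [hTT', hTT', hGG', hG, map_neg, LinearMap.neg_apply] at h
    exact h.symm
  have hBZ' : ∀ y, B v (Z y) = B v y := fun y ↦ by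
    simpa [hZ, hZZ'] using (hBZ v (Z y)).symm
  have hBT' : ∀ y, B v (T y) = -c * B v y := fun y ↦ by
    simpa [hT, hTT', hBG] using (hBT v (T y)).symm
  simp only [jointEigenprojection, End.mul_apply, LinearMap.smul_apply, map_smul, map_sub,
    map_add, LinearMap.sub_apply, LinearMap.add_apply, End.one_apply, hBG, hBZ', hBT',
    smul_eq_mul]
  field_simp
  linear_combination (-4 * B v u) * hc

theorem even_finrank_jointEigenspace [FiniteDimensional K V] [NeZero (2 : K)]
    (hGG : G * G = 1) (hZZ : Z * Z = 1) (hTZ : Commute T Z) (hTT : T * T = G)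
    (hSS : S * S = G) (hSZ : Commute S Z) (hST : S * T = T * S * G) (hc : c * c = -1)
    (hsymm : ∀ v w, B v w = B w v) (hnondeg : ∀ v, (∀ w, B v w = 0) → v = 0)
    (hBZ : ∀ v w, B (Z v) (Z w) = B v w) (hBT : ∀ v w, B (T v) (T w) = B v w)
    (hBS : ∀ v w, B (S v) (S w) = B v w) :
    Even (finrank K (jointEigenspace G Z T c)) := by
  let W := jointEigenspace G Z T c
  let β : LinearMap.BilinForm K W := B.compl₁₂ W.subtype (S ∘ₗ W.subtype)
  have hskew : ∀ v w, β v w = -β w v := fun v w ↦ by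
    change B v (S w) = -B w (S v)
    rw [← hBS w (S v), apply_apply_eq_neg_of_mem_jointEigenspace hSS v.2, map_neg, hsymm, neg_neg]
  refine LinearMap.BilinForm.even_finrank_of_nondegenerate ?_ hskew
  refine (LinearMap.IsRefl.nondegenerate_iff_separatingLeft
    fun v w h ↦ by rw [hskew, h, neg_zero]).mpr fun v hv ↦ Subtype.ext (hnondeg v fun u ↦ ?_)
  have hx := (isProj_jointEigenprojection hGG hZZ hTZ hTT (c := -c)
    (by rwa [neg_mul_neg])).map_mem u
  have hSx : -S (jointEigenprojection G Z T (-c) u) ∈ W := by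
    simpa using neg_mem (apply_mem_jointEigenspace_neg hSS hSZ hST hx)
  calc B v u = B v (jointEigenprojection G Z T (-c) u) :=
        (bilin_apply_jointEigenprojection_neg B hGG hZZ hTT hc hBZ hBT v.2 u).symm
    _ = β v ⟨_, hSx⟩ := by
        simp [β, apply_apply_eq_neg_of_mem_jointEigenspace hSS hx]
    _ = 0 := hv _

theorem exists_trace_one_add_trace_sub_two_mul_trace_eq_sixteen_mul [FiniteDimensional K V]
    [NeZero (2 : K)] (hGG : G * G = 1) (hZZ : Z * Z = 1) (hTZ : Commute T Z)
    (hTT : T * T = G) (hSS : S * S = G) (hSZ : Commute S Z) (hST : S * T = T * S * G)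
    (hc : c * c = -1) (hsymm : ∀ v w, B v w = B w v)
    (hnondeg : ∀ v, (∀ w, B v w = 0) → v = 0) (hBZ : ∀ v w, B (Z v) (Z w) = B v w)
    (hBT : ∀ v w, B (T v) (T w) = B v w) (hBS : ∀ v w, B (S v) (S w) = B v w)
    (htr : LinearMap.trace K V (G * Z) = LinearMap.trace K V G) :
    ∃ k : ℕ, LinearMap.trace K V 1 + LinearMap.trace K V Z - 2 * LinearMap.trace K V G =
      16 * k := by
  obtain ⟨k, hk⟩ := even_finrank_jointEigenspace B hGG hZZ hTZ hTT hSS hSZ hST hc hsymm hnondeg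
    hBZ hBT hBS
  have h8 := trace_one_sub_mul_one_add hGG hZZ hTZ hTT hSS hSZ hST hc
  refine ⟨k, ?_⟩
  simp only [sub_mul, mul_add, one_mul, mul_one, map_sub, map_add, htr, hk] at h8
  push_cast at h8
  linear_combination h8

end JointEigenspace

theorem FiniteField.exists_sq_add_sq_eq_neg_one (F : Type*) [Field F] [Finite F] :
    ∃ a b : F, a ^ 2 + b ^ 2 = -1 := by
  obtain ⟨p, _⟩ := CharP.exists F
  have : NeZero p := ⟨(CharP.char_is_prime F p).ne_zero⟩
  obtain ⟨a, b, hab⟩ := CharP.sq_add_sq F p (-1)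
  exact ⟨a, b, by exact_mod_cast hab⟩

section Sp4

variable {F : Type*} [Field F]

theorem Sp4.exists_quaternion_pair [Finite F] (g₁ : Sp4 F)
    (hg₁ : (g₁ : Matrix (Fin 4) (Fin 4) F) = diagonal ![1, -1, -1, 1]) :
    ∃ t s : Sp4 F, t * t = g₁ ∧ s * s = g₁ ∧ s * t = t * s * g₁ := by
  obtain ⟨a, b, hab⟩ := FiniteField.exists_sq_add_sq_eq_neg_one F
  let t : Matrix (Fin 4) (Fin 4) F := !![1, 0, 0, 0; 0, 0, 1, 0; 0, -1, 0, 0; 0, 0, 0, 1]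
  let s : Matrix (Fin 4) (Fin 4) F := !![1, 0, 0, 0; 0, a, b, 0; 0, b, -a, 0; 0, 0, 0, 1]
  have ht : t ∈ Sp4 F := by
    change tᵀ * J4 F * t = J4 F
    ext i j; fin_cases i <;> fin_cases j <;> simp [t, J4, mul_apply, Fin.sum_univ_four]
  have hs : s ∈ Sp4 F := by
    change sᵀ * J4 F * s = J4 F
    ext i j; fin_cases i <;> fin_cases j <;> simp [s, J4, mul_apply, Fin.sum_univ_four] <;>
      grind
  refine ⟨⟨t, ht⟩, ⟨s, hs⟩, Subtype.ext ?_, Subtype.ext ?_, Subtype.ext ?_⟩ <;>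
    simp only [Submonoid.coe_mul, hg₁] <;>
    ext i j <;> fin_cases i <;> fin_cases j <;> simp [t, s, mul_apply, Fin.sum_univ_four] <;>
    grind

theorem Sp4.exists_conj_eq_neg (g₁ z : Sp4 F)
    (hg₁ : (g₁ : Matrix (Fin 4) (Fin 4) F) = diagonal ![1, -1, -1, 1])
    (hz : (z : Matrix (Fin 4) (Fin 4) F) = -1) :
    ∃ c : Sp4 F, c * c = 1 ∧ g₁ * z = c * g₁ * c := by
  let c : Matrix (Fin 4) (Fin 4) F := !![0, 1, 0, 0; 1, 0, 0, 0; 0, 0, 0, -1; 0, 0, -1, 0]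
  have hc : c ∈ Sp4 F := by
    change cᵀ * J4 F * c = J4 F
    ext i j; fin_cases i <;> fin_cases j <;> simp [c, J4, mul_apply, Fin.sum_univ_four] <;>
      norm_num
  refine ⟨⟨c, hc⟩, Subtype.ext ?_, Subtype.ext ?_⟩ <;>
    simp only [Submonoid.coe_mul, Submonoid.coe_one, hg₁, hz] <;>
    ext i j <;> fin_cases i <;> fin_cases j <;>
      simp [c, mul_apply, Fin.sum_univ_four, vecMul_diagonal]

theorem Sp4.mul_self_eq_one_of_coe_eq_diagonal {g₁ : Sp4 F}
    (hg₁ : (g₁ : Matrix (Fin 4) (Fin 4) F) = diagonal ![1, -1, -1, 1]) : g₁ * g₁ = 1 :=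
  Subtype.ext <| by
    simp only [Submonoid.coe_mul, Submonoid.coe_one, hg₁, diagonal_mul_diagonal]
    ext i j; fin_cases i <;> fin_cases j <;> simp

theorem Sp4.mul_self_eq_one_of_coe_eq_neg_one {z : Sp4 F}
    (hz : (z : Matrix (Fin 4) (Fin 4) F) = -1) : z * z = 1 :=
  Subtype.ext <| by simp [hz]

theorem Sp4.commute_of_coe_eq_neg_one {z : Sp4 F} (hz : (z : Matrix (Fin 4) (Fin 4) F) = -1)
    (x : Sp4 F) : Commute x z :=
  Subtype.ext <| by simp [hz]

end Sp4

theorem sp4_character_sum_div_sixteen_general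
    {F : Type*} [Field F] [Fintype F]
    {V : Type*} [AddCommGroup V] [Module ℂ V] [FiniteDimensional ℂ V]
    (π : Representation ℂ (Sp4 F) V)
    (B : V →ₗ[ℂ] V →ₗ[ℂ] ℂ)
    (hsymm : ∀ v w, B v w = B w v)
    (hinv : ∀ (g : Sp4 F) (v w : V), B (π g v) (π g w) = B v w)
    (hnondeg : ∀ v : V, (∀ w : V, B v w = 0) → v = 0)
    (g₁ z : Sp4 F)
    (hg₁ : (g₁ : Matrix (Fin 4) (Fin 4) F) = Matrix.diagonal ![1, -1, -1, 1])
    (hz : (z : Matrix (Fin 4) (Fin 4) F) = -1) :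
    ∃ m : ℤ,
      LinearMap.trace ℂ V (π 1) + LinearMap.trace ℂ V (π z)
        - 2 * LinearMap.trace ℂ V (π g₁) = (16 * m : ℤ) := by
  obtain ⟨t, s, htt, hss, hst⟩ := Sp4.exists_quaternion_pair g₁ hg₁
  obtain ⟨c, hcc, hconj⟩ := Sp4.exists_conj_eq_neg g₁ z hg₁ hz
  have hcomm := Sp4.commute_of_coe_eq_neg_one hz
  have htr : LinearMap.trace ℂ V (π g₁ * π z) = LinearMap.trace ℂ V (π g₁) := by
    rw [← π.map_mul, hconj, π.map_mul, LinearMap.trace_mul_comm, ← π.map_mul, ← mul_assoc, hcc,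
      one_mul]
  obtain ⟨k, hk⟩ := exists_trace_one_add_trace_sub_two_mul_trace_eq_sixteen_mul B
    (by rw [← map_mul, Sp4.mul_self_eq_one_of_coe_eq_diagonal hg₁, map_one])
    (by rw [← map_mul, Sp4.mul_self_eq_one_of_coe_eq_neg_one hz, map_one])
    ((hcomm t).map π) (by rw [← map_mul, htt]) (by rw [← map_mul, hss]) ((hcomm s).map π)
    (by simp only [← map_mul, hst]) Complex.I_mul_I hsymm hnondeg (hinv z) (hinv t) (hinv s)
    htr
  exact ⟨k, by rw [map_one, hk]; push_cast; ring⟩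

theorem sp4_character_sum_div_sixteen
    {F : Type*} [Field F] [Fintype F] (hq : Odd (Fintype.card F))
    {V : Type*} [AddCommGroup V] [Module ℂ V] [FiniteDimensional ℂ V]
    (π : Representation ℂ (Sp4 F) V)
    (B : V →ₗ[ℂ] V →ₗ[ℂ] ℂ)
    (hsymm : ∀ v w, B v w = B w v)
    (hinv : ∀ (g : Sp4 F) (v w : V), B (π g v) (π g w) = B v w)
    (hnondeg : ∀ v : V, (∀ w : V, B v w = 0) → v = 0)
    (g₁ z : Sp4 F)
    (hg₁ : (g₁ : Matrix (Fin 4) (Fin 4) F) = Matrix.diagonal ![1, -1, -1, 1])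
    (hz : (z : Matrix (Fin 4) (Fin 4) F) = -1) :
    ∃ m : ℤ,
      LinearMap.trace ℂ V (π 1) + LinearMap.trace ℂ V (π z)
        - 2 * LinearMap.trace ℂ V (π g₁) = (16 * m : ℤ) :=
  sp4_character_sum_div_sixteen_general π B hsymm hinv hnondeg g₁ z hg₁ hz
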